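/- Let X and Y be Banach spaces, let G ∈ L(X,Y) with ‖G‖ = 1, assume ‖·‖_G is a norm on L(X,Y), and let T ∈ L(X,Y) with ‖T‖_G = 1. The following are equivalent: (i) T is a smooth point of the unit ball of (L(X,Y), ‖·‖_G), i.e., there is exactly one functional φ ∈ L(X,Y)* with φ(T) = 1 and |φ(S)| ≤ ‖S‖_G for all S ∈ L(X,Y); (ii) the weak*-closure of { ψ_{x_α, y_α*} : (x_α, y_α*) ∈ 𝒜_G(T) } is a singleton {φ} with φ(T) = 1. -/

import Mathlib

open Filter Topology

universe u v w

variable {𝕜 : Type u} [RCLike 𝕜]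

/-- The `G`-norm of an operator `T`:
`‖T‖_G := inf_{δ>0} sup {‖Tx‖ : x ∈ S_X, ‖Gx‖ > 1 - δ}`. -/
noncomputable def Gnorm {X Y : Type*} [NormedAddCommGroup X] [NormedSpace 𝕜 X]
    [NormedAddCommGroup Y] [NormedSpace 𝕜 Y] (G T : X →L[𝕜] Y) : ℝ :=
  ⨅ δ : {δ : ℝ // 0 < δ},
    sSup {r : ℝ | ∃ x : X, ‖x‖ = 1 ∧ 1 - (δ : ℝ) < ‖G x‖ ∧ r = ‖T x‖}

/-- The weak*-closure of `{ψ_{x_α, y_α*} : (x_α, y_α*) ∈ 𝒜_G(T)}`: the set of all weak*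
limits of nets of functionals `ψ_{x_α, y_α*}` with `x_α ∈ S_X`, `y_α* ∈ S_{Y*}`,
`‖G x_α‖ → 1` and `y_α*(T x_α) → 1`. -/
def limAG {X : Type v} {Y : Type w} [NormedAddCommGroup X] [NormedSpace 𝕜 X]
    [NormedAddCommGroup Y] [NormedSpace 𝕜 Y] (G T : X →L[𝕜] Y) :
    Set ((X →L[𝕜] Y) →L[𝕜] 𝕜) :=
  {φ | ∃ (ι : Type (max u v w)) (l : Filter ι), l.NeBot ∧
    ∃ (x : ι → X) (y : ι → (Y →L[𝕜] 𝕜)),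
      (∀ i, ‖x i‖ = 1) ∧ (∀ i, ‖y i‖ = 1) ∧
      Tendsto (fun i => ‖G (x i)‖) l (𝓝 1) ∧
      Tendsto (fun i => (y i) (T (x i))) l (𝓝 1) ∧
      (∀ S : X →L[𝕜] Y, Tendsto (fun i => (y i) (S (x i))) l (𝓝 (φ S)))}

/-!
Every weak* limit `φ` of functionals `ψ_{x_α, y_α*}` with `(x_α, y_α*) ∈ 𝒜_G(T)` norms `T`:
`φ(T) = 1` and `|φ(S)| ≤ ‖S‖_G`. Conversely, let `ψ` norm `T` and fix `S`. For small `t > 0`,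
`‖T + tS‖_G ≥ re ψ(T + tS) = 1 + t re ψ(S)` yields unit vectors `x` with `‖G x‖` close to `1` and
`‖(T + tS) x‖ > 1 + t re ψ(S) - t²`, while `‖T‖_G = 1` gives `‖T x‖ ≤ 1 + t²` on such `x`.
A norming functional `y*` of `(T + tS) x` then satisfies `y*(T x) ≈ 1` and
`re y*(S x) > re ψ(S) - 2t`. By Banach–Alaoglu these pairs have a weak* cluster point `φ` in the
limit set with `re ψ(S) ≤ re φ(S)`. So if the limit set is `{φ}`, then `re ψ ≤ re φ` and `ψ = φ`;
if `ψ` is the only norming functional, the (nonempty) limit set is `{ψ}`.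
-/

theorem ContinuousLinearMap.exists_norm_eq_one_lt_norm_apply {E F : Type*}
    [NormedAddCommGroup E] [NormedSpace 𝕜 E] [NormedAddCommGroup F] [NormedSpace 𝕜 F]
    (f : E →L[𝕜] F) (hf : f ≠ 0) {r : ℝ} (hr : r < ‖f‖) : ∃ x : E, ‖x‖ = 1 ∧ r < ‖f x‖ := by
  obtain ⟨x, hx, hlt⟩ := f.exists_nnnorm_eq_one_lt_apply_of_lt_opNNNorm (r := r.toNNReal)
    (by rw [← NNReal.coe_lt_coe, coe_nnnorm]; exact max_lt hr (norm_pos_iff.2 hf))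
  exact ⟨x, congrArg NNReal.toReal hx, (Real.le_coe_toNNReal r).trans_lt hlt⟩

theorem ContinuousLinearMap.eq_of_forall_re_le {E : Type*} [AddCommGroup E] [Module 𝕜 E]
    [TopologicalSpace E] {f g : E →L[𝕜] 𝕜} (h : ∀ e, RCLike.re (f e) ≤ RCLike.re (g e)) :
    f = g := by
  have hre : ∀ e, RCLike.re (f e) = RCLike.re (g e) := fun e =>
    (h e).antisymm (by simpa only [map_neg, neg_le_neg_iff] using h (-e))
  ext e
  refine RCLike.ext (hre e) ?_
  simpa only [map_smul, smul_eq_mul, RCLike.I_mul_re, neg_inj] using hre ((RCLike.I : 𝕜) • e)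

theorem exists_ultrafilter_tendsto_apply {ι E : Type*} [NormedAddCommGroup E] [NormedSpace 𝕜 E]
    (l : Filter ι) [l.NeBot] (f : ι → E →L[𝕜] 𝕜) {r : ℝ} (hf : ∀ i, ‖f i‖ ≤ r) :
    ∃ (U : Ultrafilter ι) (φ : E →L[𝕜] 𝕜), ↑U ≤ l ∧
      ∀ e, Tendsto (fun i => f i e) U (𝓝 (φ e)) := by
  let U := Ultrafilter.of l
  obtain ⟨φ, -, hφ⟩ := (WeakDual.isCompact_closedBall (0 : E →L[𝕜] 𝕜) r).ultrafilter_le_nhds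
    (U.map fun i => WeakDual.toStrongDual.symm (f i)) (by
      rw [Ultrafilter.coe_map, le_principal_iff, mem_map]
      exact univ_mem' fun i => by simpa using hf i)
  exact ⟨U, WeakDual.toStrongDual φ, Ultrafilter.of_le l,
    fun e => ((WeakDual.eval_continuous e).tendsto φ).comp hφ⟩

section NormingVector

variable {E : Type*} [NormedAddCommGroup E] [NormedSpace 𝕜 E] {y : E →L[𝕜] 𝕜} {u w : E}
  {t η : ℝ}

theorem mul_re_apply_gt_of_apply_eq_norm {a : ℝ} (hy : ‖y‖ ≤ 1)
    (hyv : y (u + (t : 𝕜) • w) = ‖u + (t : 𝕜) • w‖) (hu : ‖u‖ ≤ 1 + η)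
    (hv : 1 + t * a - η < ‖u + (t : 𝕜) • w‖) : t * a - 2 * η < t * RCLike.re (y w) := by
  have hre : RCLike.re (y u) + t * RCLike.re (y w) = ‖u + (t : 𝕜) • w‖ := by
    simpa [RCLike.re_ofReal_mul] using congrArg RCLike.re hyv
  have hyu : RCLike.re (y u) ≤ 1 + η :=
    (RCLike.re_le_norm _).trans ((y.le_of_opNorm_le hy u).trans (by linarith))
  linarith

theorem norm_apply_sub_one_le_of_apply_eq_norm {c : ℝ} (ht : 0 ≤ t) (hy : ‖y‖ ≤ 1)
    (hyv : y (u + (t : 𝕜) • w) = ‖u + (t : 𝕜) • w‖) (hu : ‖u‖ ≤ 1 + η) (hw : ‖w‖ ≤ c)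
    (hv : 1 - t * c - η < ‖u + (t : 𝕜) • w‖) : ‖y u - 1‖ ≤ η + 2 * t * c := by
  set v := u + (t : 𝕜) • w
  have hyu : y u - 1 = ((‖v‖ - 1 : ℝ) : 𝕜) - (t : 𝕜) * y w := by
    have : y v = y u + t * y w := by simp [v]
    push_cast
    linear_combination hyv - this
  have htw : ‖(t : 𝕜) • w‖ ≤ t * c := by
    rw [norm_smul, RCLike.norm_ofReal, abs_of_nonneg ht]
    exact mul_le_mul_of_nonneg_left hw ht
  have hv_le : ‖v‖ ≤ 1 + η + t * c := (norm_add_le _ _).trans (by linarith)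
  have hyw : ‖(t : 𝕜) * y w‖ ≤ t * c := by
    rw [norm_mul, RCLike.norm_ofReal, abs_of_nonneg ht]
    exact mul_le_mul_of_nonneg_left ((y.le_of_opNorm_le hy w).trans (by linarith)) ht
  calc ‖y u - 1‖ ≤ |‖v‖ - 1| + t * c := by
        rw [hyu]
        refine (norm_sub_le _ _).trans (add_le_add ?_ hyw)
        rw [RCLike.norm_ofReal]
    _ ≤ η + 2 * t * c := by linarith [abs_le.2 (⟨by linarith, by linarith⟩ :
          -(η + t * c) ≤ ‖v‖ - 1 ∧ ‖v‖ - 1 ≤ η + t * c)]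

end NormingVector

section Gnorm

variable {X : Type v} {Y : Type w}
  [NormedAddCommGroup X] [NormedSpace 𝕜 X] [NormedAddCommGroup Y] [NormedSpace 𝕜 Y]

def gnormSlice (G S : X →L[𝕜] Y) (δ : ℝ) : Set ℝ :=
  {r : ℝ | ∃ x : X, ‖x‖ = 1 ∧ 1 - δ < ‖G x‖ ∧ r = ‖S x‖}

variable {G S : X →L[𝕜] Y}

theorem sSup_gnormSlice_le_opNorm (δ : ℝ) : sSup (gnormSlice G S δ) ≤ ‖S‖ :=
  Real.sSup_le (by rintro r ⟨x, hx, -, rfl⟩; simpa [hx] using S.le_opNorm x) (norm_nonneg S)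

theorem norm_apply_le_sSup_gnormSlice {δ : ℝ} {x : X} (hx : ‖x‖ = 1) (hGx : 1 - δ < ‖G x‖) :
    ‖S x‖ ≤ sSup (gnormSlice G S δ) :=
  le_csSup ⟨‖S‖, fun _ hr => by
    obtain ⟨x, hx, -, rfl⟩ := hr
    simpa [hx] using S.le_opNorm x⟩ ⟨x, hx, hGx, rfl⟩

theorem Gnorm_le_sSup_gnormSlice {δ : ℝ} (hδ : 0 < δ) : Gnorm G S ≤ sSup (gnormSlice G S δ) := by
  refine ciInf_le ⟨0, ?_⟩ (⟨δ, hδ⟩ : {δ : ℝ // 0 < δ})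
  rintro _ ⟨δ', rfl⟩
  exact Real.sSup_nonneg fun _ ⟨x, _, _, hr⟩ => hr ▸ norm_nonneg (S x)

theorem le_Gnorm {c : ℝ} (h : ∀ δ > 0, c ≤ sSup (gnormSlice G S δ)) : c ≤ Gnorm G S :=
  have : Nonempty {δ : ℝ // 0 < δ} := ⟨⟨1, one_pos⟩⟩
  le_ciInf fun δ => h δ δ.2

theorem Gnorm_le_opNorm : Gnorm G S ≤ ‖S‖ :=
  (Gnorm_le_sSup_gnormSlice one_pos).trans (sSup_gnormSlice_le_opNorm 1)

theorem exists_lt_norm_apply_of_lt_Gnorm (hG : ‖G‖ = 1) {c δ : ℝ} (hc : c < Gnorm G S)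
    (hδ : 0 < δ) : ∃ x, ‖x‖ = 1 ∧ 1 - δ < ‖G x‖ ∧ c < ‖S x‖ := by
  have hne : (gnormSlice G S δ).Nonempty := by
    obtain ⟨x, hx, hGx⟩ := G.exists_norm_eq_one_lt_norm_apply
      (norm_ne_zero_iff.1 (hG ▸ one_ne_zero)) (r := 1 - δ) (by linarith)
    exact ⟨_, x, hx, hGx, rfl⟩
  obtain ⟨_, ⟨x, hx, hGx, rfl⟩, hlt⟩ :=
    exists_lt_of_lt_csSup hne (hc.trans_le (Gnorm_le_sSup_gnormSlice hδ))
  exact ⟨x, hx, hGx, hlt⟩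

theorem exists_forall_norm_apply_lt_of_Gnorm_lt {c : ℝ} (hc : Gnorm G S < c) :
    ∃ δ > 0, ∀ x, ‖x‖ = 1 → 1 - δ < ‖G x‖ → ‖S x‖ < c := by
  obtain ⟨⟨δ, hδ⟩, hlt⟩ := exists_lt_of_ciInf_lt hc
  exact ⟨δ, hδ, fun x hx hGx => (norm_apply_le_sSup_gnormSlice hx hGx).trans_lt hlt⟩

end Gnorm

section LimAG

variable {X : Type v} {Y : Type w}
  [NormedAddCommGroup X] [NormedSpace 𝕜 X] [NormedAddCommGroup Y] [NormedSpace 𝕜 Y]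
  {G T : X →L[𝕜] Y}

def IsGNormingFunctional (G T : X →L[𝕜] Y) (φ : (X →L[𝕜] Y) →L[𝕜] 𝕜) : Prop :=
  φ T = 1 ∧ ∀ S : X →L[𝕜] Y, ‖φ S‖ ≤ Gnorm G S

theorem mem_limAG_of_tendsto {φ : (X →L[𝕜] Y) →L[𝕜] 𝕜} {l : Filter ℕ}
    [l.NeBot] {x : ℕ → X} {y : ℕ → Y →L[𝕜] 𝕜} (hx : ∀ n, ‖x n‖ = 1) (hy : ∀ n, ‖y n‖ = 1)
    (hGx : Tendsto (fun n => ‖G (x n)‖) l (𝓝 1)) (hTx : Tendsto (fun n => y n (T (x n))) l (𝓝 1))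
    (hφ : ∀ S : X →L[𝕜] Y, Tendsto (fun n => y n (S (x n))) l (𝓝 (φ S))) :
    φ ∈ limAG G T :=
  ⟨ULift ℕ, l.map ULift.up, inferInstance, fun n => x n.down, fun n => y n.down,
    fun n => hx n.down, fun n => hy n.down, tendsto_map'_iff.2 hGx, tendsto_map'_iff.2 hTx,
    fun S => tendsto_map'_iff.2 (hφ S)⟩

theorem isGNormingFunctional_of_mem_limAG {φ : (X →L[𝕜] Y) →L[𝕜] 𝕜}
    (hφ : φ ∈ limAG G T) : IsGNormingFunctional G T φ := by
  obtain ⟨ι, l, hl, x, y, hx, hy, hGx, hTx, hS⟩ := hφ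
  refine ⟨tendsto_nhds_unique (hS T) hTx, fun S => le_Gnorm fun δ hδ => ?_⟩
  refine le_of_tendsto (hS S).norm ?_
  filter_upwards [hGx.eventually (eventually_gt_nhds (by linarith : 1 - δ < 1))] with i hi
  calc ‖y i (S (x i))‖ ≤ ‖S (x i)‖ := by simpa [hy i] using (y i).le_opNorm (S (x i))
    _ ≤ sSup (gnormSlice G S δ) := norm_apply_le_sSup_gnormSlice (hx i) hi

theorem exists_mem_limAG_le_re_of_approx {S : X →L[𝕜] Y} {a : ℝ}
    (h : ∀ ε > 0, ∃ (x : X) (y : Y →L[𝕜] 𝕜), ‖x‖ = 1 ∧ ‖y‖ = 1 ∧ dist ‖G x‖ 1 < ε ∧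
      dist (y (T x)) 1 < ε ∧ a - ε < RCLike.re (y (S x))) :
    ∃ φ ∈ limAG G T, a ≤ RCLike.re (φ S) := by
  choose x y hx hy hGx hTx hSx using fun n : ℕ => h (1 / (n + 1)) Nat.one_div_pos_of_nat
  obtain ⟨U, φ, hU, hφ⟩ := exists_ultrafilter_tendsto_apply atTop
    (fun n => (y n).comp (ContinuousLinearMap.apply 𝕜 Y (x n))) (r := 1) fun n =>
      ContinuousLinearMap.opNorm_le_bound _ zero_le_one fun S => by
        simpa [hx n, hy n] using (y n).le_opNorm_of_le (S.le_opNorm_of_le (hx n).le)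
  have hε : Tendsto (fun n : ℕ => 1 / ((n : ℝ) + 1)) U (𝓝 0) :=
    tendsto_one_div_add_atTop_nhds_zero_nat.mono_left hU
  refine ⟨φ, mem_limAG_of_tendsto hx hy ?_ ?_ hφ, ?_⟩
  · exact tendsto_iff_dist_tendsto_zero.2
      (squeeze_zero (fun _ => dist_nonneg) (fun n => (hGx n).le) hε)
  · exact tendsto_iff_dist_tendsto_zero.2
      (squeeze_zero (fun _ => dist_nonneg) (fun n => (hTx n).le) hε)
  · refine le_of_tendsto_of_tendsto (by simpa using hε.const_sub a)
      ((RCLike.continuous_re.tendsto _).comp (hφ S)) (Eventually.of_forall fun n => (hSx n).le)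

theorem exists_approx_of_isGNormingFunctional (hG : ‖G‖ = 1)
    (hT : Gnorm G T = 1) {ψ : (X →L[𝕜] Y) →L[𝕜] 𝕜} (hψ : IsGNormingFunctional G T ψ)
    (S : X →L[𝕜] Y) {ε : ℝ} (hε : 0 < ε) :
    ∃ (x : X) (y : Y →L[𝕜] 𝕜), ‖x‖ = 1 ∧ ‖y‖ = 1 ∧ dist ‖G x‖ 1 < ε ∧
      dist (y (T x)) 1 < ε ∧ RCLike.re (ψ S) - ε < RCLike.re (y (S x)) := by
  set a := RCLike.re (ψ S)
  have ha : -‖S‖ ≤ a :=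
    neg_le_of_abs_le ((RCLike.abs_re_le_norm _).trans ((hψ.2 S).trans Gnorm_le_opNorm))
  obtain ⟨t, ⟨hts, htε⟩, ht⟩ : ∃ t : ℝ, (t * t + 2 * t * ‖S‖ < ε ∧ 2 * t < ε) ∧ 0 < t := by
    have h₁ : Tendsto (fun t : ℝ => t * t + 2 * t * ‖S‖) (𝓝 0) (𝓝 0) :=
      Continuous.tendsto' (by fun_prop) 0 0 (by simp)
    have h₂ : Tendsto (fun t : ℝ => 2 * t) (𝓝 0) (𝓝 0) :=
      Continuous.tendsto' (by fun_prop) 0 0 (by simp)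
    exact (((h₁.eventually (gt_mem_nhds hε)).and (h₂.eventually (gt_mem_nhds hε))).filter_mono
      nhdsWithin_le_nhds |>.and self_mem_nhdsWithin).exists (f := 𝓝[>] (0 : ℝ))
  obtain ⟨δ, hδ, hTδ⟩ := exists_forall_norm_apply_lt_of_Gnorm_lt (G := G) (S := T)
    (c := 1 + t * t) (by rw [hT]; linarith [mul_pos ht ht])
  have hlow : 1 + t * a - t * t < Gnorm G (T + (t : 𝕜) • S) :=
    calc 1 + t * a - t * t < RCLike.re (ψ (T + (t : 𝕜) • S)) := by
          simp [hψ.1, a, mul_pos ht ht]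
      _ ≤ Gnorm G (T + (t : 𝕜) • S) := (RCLike.re_le_norm _).trans (hψ.2 _)
  obtain ⟨x, hx, hGx, hv⟩ := exists_lt_norm_apply_of_lt_Gnorm hG hlow (lt_min hδ hε)
  have : Nontrivial Y := by
    obtain ⟨x', hx'⟩ := DFunLike.ne_iff.1 (norm_ne_zero_iff.1 (hG ▸ one_ne_zero) : G ≠ 0)
    exact nontrivial_of_ne _ _ hx'
  obtain ⟨y, hy, hyv⟩ := exists_dual_vector' 𝕜 ((T + (t : 𝕜) • S) x)
  rw [add_apply, smul_apply] at hv hyv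
  have hTx : ‖T x‖ ≤ 1 + t * t := (hTδ x hx (by linarith [min_le_left δ ε])).le
  have hSx : ‖S x‖ ≤ ‖S‖ := by simpa [hx] using S.le_opNorm x
  have hGx1 : ‖G x‖ ≤ 1 := by simpa [hG, hx] using G.le_opNorm x
  refine ⟨x, y, hx, hy, ?_, ?_, ?_⟩
  · rw [Real.dist_eq, abs_sub_comm, abs_of_nonneg (sub_nonneg.2 hGx1)]
    linarith [min_le_right δ ε]
  · rw [dist_eq_norm]
    refine (norm_apply_sub_one_le_of_apply_eq_norm ht.le hy.le hyv hTx hSx ?_).trans_lt hts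
    nlinarith
  · have := mul_re_apply_gt_of_apply_eq_norm hy.le hyv hTx hv
    have : a - 2 * t < RCLike.re (y (S x)) := lt_of_mul_lt_mul_left (by linarith) ht.le
    linarith

theorem exists_mem_limAG_re_le (hG : ‖G‖ = 1) (hT : Gnorm G T = 1)
    {ψ : (X →L[𝕜] Y) →L[𝕜] 𝕜} (hψ : IsGNormingFunctional G T ψ) (S : X →L[𝕜] Y) :
    ∃ φ ∈ limAG G T, RCLike.re (ψ S) ≤ RCLike.re (φ S) :=
  exists_mem_limAG_le_re_of_approx fun _ hε => exists_approx_of_isGNormingFunctional hG hT hψ S hε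

end LimAG

theorem stmt_16_general {X : Type v} {Y : Type w}
    [NormedAddCommGroup X] [NormedSpace 𝕜 X]
    [NormedAddCommGroup Y] [NormedSpace 𝕜 Y]
    (G : X →L[𝕜] Y) (hG : ‖G‖ = 1)
    (T : X →L[𝕜] Y) (hT : Gnorm G T = 1) :
    (∃! φ : (X →L[𝕜] Y) →L[𝕜] 𝕜,
        φ T = 1 ∧ ∀ S : X →L[𝕜] Y, ‖φ S‖ ≤ Gnorm G S) ↔
      (∃ φ : (X →L[𝕜] Y) →L[𝕜] 𝕜, limAG G T = {φ} ∧ φ T = 1) := by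
  constructor
  · rintro ⟨φ, hφ, huniq⟩
    have hsub : ∀ χ ∈ limAG G T, χ = φ := fun χ hχ =>
      huniq χ (isGNormingFunctional_of_mem_limAG hχ)
    obtain ⟨φ', hφ', -⟩ := exists_mem_limAG_re_le hG hT hφ 0
    exact ⟨φ, Set.eq_singleton_iff_unique_mem.2 ⟨hsub φ' hφ' ▸ hφ', hsub⟩, hφ.1⟩
  · rintro ⟨φ, hsing, -⟩
    have hφ : φ ∈ limAG G T := hsing ▸ rfl
    refine ⟨φ, isGNormingFunctional_of_mem_limAG hφ, fun ψ hψ =>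
      ContinuousLinearMap.eq_of_forall_re_le fun S => ?_⟩
    obtain ⟨φ', hφ', hle⟩ := exists_mem_limAG_re_le hG hT hψ S
    rw [hsing, Set.mem_singleton_iff] at hφ'
    exact hφ' ▸ hle

/-- Smoothness criterion for the `G`-norm: `T` with `‖T‖_G = 1` is a smooth point of the
unit ball of `(L(X,Y), ‖·‖_G)` (i.e. it has exactly one norming functional) if and only
if the weak*-closure of `{ψ_{x_α, y_α*} : (x_α, y_α*) ∈ 𝒜_G(T)}` is a singleton `{φ}`
with `φ(T) = 1`. -/
theorem stmt_16 {X : Type v} {Y : Type w}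
    [NormedAddCommGroup X] [NormedSpace 𝕜 X] [CompleteSpace X]
    [NormedAddCommGroup Y] [NormedSpace 𝕜 Y] [CompleteSpace Y]
    (G : X →L[𝕜] Y) (hG : ‖G‖ = 1)
    (hGnorm : ∀ S : X →L[𝕜] Y, Gnorm G S = 0 → S = 0)
    (T : X →L[𝕜] Y) (hT : Gnorm G T = 1) :
    (∃! φ : (X →L[𝕜] Y) →L[𝕜] 𝕜,
        φ T = 1 ∧ ∀ S : X →L[𝕜] Y, ‖φ S‖ ≤ Gnorm G S) ↔
      (∃ φ : (X →L[𝕜] Y) →L[𝕜] 𝕜, limAG G T = {φ} ∧ φ T = 1) :=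
  stmt_16_general G hG T hT
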